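/- Let G = (V,E) be a finite simple graph and let A ∈ 𝒜_G be a generalized adjacency matrix of G. Then, for every w ∈ ℝ₊^V: H(A,w) = max{⟨w, diag((I+Â)^{1/2} X (I+Â)^{1/2})⟩ : X ⪰ 0, tr(X) = 1} = max{⟨w,x⟩ : x ∈ ℋ_A}; moreover ℋ_A = {x ∈ ℝ₊^V : Υ(A,x) ≤ 1}, i.e. ℋ_A is the unit convex corner of Υ(A,·). -/

import Mathlib

open scoped BigOperators Pointwise

variable {V : Type*} [Fintype V] [DecidableEq V]

/-- Inner product on `ℝ^V`. -/
def ip (w z : V → ℝ) : ℝ := ∑ i, w i * z i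

/-- `κ` is a positive definite monotone gauge on the nonnegative orthant of `ℝ^V`. -/
def IsPDMGauge (κ : (V → ℝ) → ℝ) : Prop :=
  κ 0 = 0 ∧
  (∀ w : V → ℝ, 0 ≤ w → 0 ≤ κ w) ∧
  (∀ (c : ℝ) (w : V → ℝ), 0 < c → 0 ≤ w → κ (c • w) = c * κ w) ∧
  (∀ w z : V → ℝ, 0 ≤ w → 0 ≤ z → κ (w + z) ≤ κ w + κ z) ∧
  (∀ w : V → ℝ, 0 ≤ w → w ≠ 0 → 0 < κ w) ∧
  (∀ w z : V → ℝ, 0 ≤ w → w ≤ z → κ w ≤ κ z)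

/-- The dual gauge `κ∘(z) = sup{⟨w,z⟩ : w ≥ 0, κ(w) ≤ 1}`. -/
noncomputable def dualGauge (κ : (V → ℝ) → ℝ) (z : V → ℝ) : ℝ :=
  sSup {r : ℝ | ∃ w : V → ℝ, 0 ≤ w ∧ κ w ≤ 1 ∧ r = ip w z}

/-- The antiblocker of a subset of the nonnegative orthant. -/
def abl (X : Set (V → ℝ)) : Set (V → ℝ) := {y | 0 ≤ y ∧ ∀ x ∈ X, ip x y ≤ 1}

/-- A convex corner: compact, convex, nonempty interior, subset of the nonnegative
orthant, and lower-comprehensive. -/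
def IsConvexCorner (C : Set (V → ℝ)) : Prop :=
  IsCompact C ∧ Convex ℝ C ∧ (interior C).Nonempty ∧ (∀ x ∈ C, 0 ≤ x) ∧
  ∀ x y : V → ℝ, 0 ≤ x → x ≤ y → y ∈ C → x ∈ C

/-- Minkowski functional of a set. -/
noncomputable def minkowski (C : Set (V → ℝ)) (x : V → ℝ) : ℝ :=
  sInf {μ : ℝ | 0 ≤ μ ∧ x ∈ μ • C}

/-- Support function of a set. -/
noncomputable def suppFn (C : Set (V → ℝ)) (y : V → ℝ) : ℝ :=
  sSup {r : ℝ | ∃ x ∈ C, r = ip x y}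

/-- A stable (independent) set of vertices. -/
def IsStableSet (G : SimpleGraph V) (S : Finset V) : Prop :=
  ∀ i ∈ S, ∀ j ∈ S, ¬ G.Adj i j

/-- Weighted stability number `α(G,w)`. -/
noncomputable def alphaW (G : SimpleGraph V) (w : V → ℝ) : ℝ :=
  sSup {r : ℝ | ∃ S : Finset V, IsStableSet G S ∧ r = ∑ i ∈ S, w i}

/-- Stability number `α(G)`. -/
noncomputable def stabilityNumber (G : SimpleGraph V) : ℕ :=
  sSup {n : ℕ | ∃ S : Finset V, IsStableSet G S ∧ S.card = n}

/-- Weighted fractional chromatic number `χ_f(G,w)`. -/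
noncomputable def chiF (G : SimpleGraph V) (w : V → ℝ) : ℝ :=
  sInf {r : ℝ | ∃ y : Finset V → ℝ,
    (∀ S, 0 ≤ y S) ∧ (∀ S, ¬ IsStableSet G S → y S = 0) ∧
    (∀ i, w i ≤ ∑ S : Finset V, (if i ∈ S then y S else 0)) ∧
    r = ∑ S : Finset V, y S}

/-- The stable set polytope `STAB(G)`. -/
def STABset (G : SimpleGraph V) : Set (V → ℝ) :=
  convexHull ℝ {x : V → ℝ | ∃ S : Finset V, IsStableSet G S ∧
    x = fun i => if i ∈ S then (1 : ℝ) else 0}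

/-- The fractional stable set polytope `QSTAB(G)`. -/
def QSTABset (H : SimpleGraph V) : Set (V → ℝ) :=
  {x | 0 ≤ x ∧ ∀ K : Finset V, H.IsClique (↑K : Set V) → ∑ i ∈ K, x i ≤ 1}

/-- The set of (real) eigenvalues of a matrix. -/
def spectrumSet (M : Matrix V V ℝ) : Set ℝ :=
  {t | ∃ x : V → ℝ, x ≠ 0 ∧ M.mulVec x = t • x}

/-- Largest eigenvalue. -/
noncomputable def lambdaMax (M : Matrix V V ℝ) : ℝ := sSup (spectrumSet M)

/-- Smallest eigenvalue. -/
noncomputable def lambdaMin (M : Matrix V V ℝ) : ℝ := sInf (spectrumSet M)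

/-- Positive semidefinite square root (zero on non-PSD matrices). -/
noncomputable def psdSqrt (M : Matrix V V ℝ) : Matrix V V ℝ :=
  letI := Classical.dec M.PosSemidef
  if h : M.PosSemidef then (h.1.eigenvectorUnitary.1 *
    Matrix.diagonal ((↑) ∘ Real.sqrt ∘ h.1.eigenvalues) *
    (star h.1.eigenvectorUnitary : Matrix V V ℝ)) else 0

/-- `Â = A / (-λ_min(A))` for nonzero `A`, and `0̂ = 0`. -/
noncomputable def hatM (A : Matrix V V ℝ) : Matrix V V ℝ :=
  if A = 0 then 0 else (-(lambdaMin A))⁻¹ • A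

/-- `A` is a generalized adjacency matrix of `G`: symmetric, with `A i j = 0`
whenever `i` and `j` are non-adjacent (in particular on the diagonal). -/
def IsGenAdj (G : SimpleGraph V) (A : Matrix V V ℝ) : Prop :=
  A.IsSymm ∧ ∀ i j, ¬ G.Adj i j → A i j = 0

/-- Weighted Hoffman bound `H(A,w) = λ_max(W^{1/2}(I+Â)W^{1/2})`, `W = Diag w`. -/
noncomputable def hoffman (A : Matrix V V ℝ) (w : V → ℝ) : ℝ :=
  lambdaMax (psdSqrt (Matrix.diagonal w) * (1 + hatM A) * psdSqrt (Matrix.diagonal w))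

/-- The feasible region `𝒰_A` of the SDP defining `Υ(A,·)`. -/
def Uset (A : Matrix V V ℝ) : Set (V → ℝ) :=
  {x | 0 ≤ x ∧ ((1 : Matrix V V ℝ) -
    psdSqrt (1 + hatM A) * Matrix.diagonal x * psdSqrt (1 + hatM A)).PosSemidef}

/-- `Υ(A,w) = max{⟨w,x⟩ : x ≥ 0, (I+Â)^{1/2} Diag(x) (I+Â)^{1/2} ⪯ I}`. -/
noncomputable def upsilon (A : Matrix V V ℝ) (w : V → ℝ) : ℝ :=
  sSup {r : ℝ | ∃ x ∈ Uset A, r = ip w x}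

/-- The diagonal of a matrix, as a vector. -/
def diagVec (M : Matrix V V ℝ) : V → ℝ := fun i => M i i

/-- The convex corner `ℋ_A`. -/
def Hset (A : Matrix V V ℝ) : Set (V → ℝ) :=
  {x | 0 ≤ x ∧ ∃ Y : Matrix V V ℝ, Y.PosSemidef ∧ Y.trace ≤ 1 ∧
    ∀ i, x i ≤ diagVec (psdSqrt (1 + hatM A) * Y * psdSqrt (1 + hatM A)) i}

/-- Objective function of Luz's convex quadratic program:
`2⟨w,x⟩ − ⟨x, W^{1/2}(I+Â)W^{1/2} x⟩`. -/
noncomputable def luzObj (A : Matrix V V ℝ) (w x : V → ℝ) : ℝ :=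
  2 * ip w x - ∑ i, x i *
    ((psdSqrt (Matrix.diagonal w) * (1 + hatM A) * psdSqrt (Matrix.diagonal w)).mulVec x) i

/-- Luz's bound `ℓ(A,w)` as a real number (supremum of the CQP objective). -/
noncomputable def luz (A : Matrix V V ℝ) (w : V → ℝ) : ℝ :=
  sSup {r : ℝ | ∃ x : V → ℝ, 0 ≤ x ∧ r = luzObj A w x}

/-- Luz's bound `ℓ(A,w)` with values in `ℝ ∪ {±∞}`. -/
noncomputable def luzE (A : Matrix V V ℝ) (w : V → ℝ) : EReal :=
  sSup {r : EReal | ∃ x : V → ℝ, 0 ≤ x ∧ r = ((luzObj A w x : ℝ) : EReal)}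

/-- The theta body `TH(G)`. -/
def THbody (G : SimpleGraph V) : Set (V → ℝ) :=
  {x | 0 ≤ x ∧ ∃ X : Matrix V V ℝ, X.PosSemidef ∧ (∀ i, X i i = x i) ∧
    (∀ i j, G.Adj i j → X i j = 0) ∧
    (Matrix.fromBlocks (1 : Matrix Unit Unit ℝ) (Matrix.of fun _ j => x j)
      (Matrix.of fun i _ => x i) X).PosSemidef}

/-- Weighted Lovász theta number `θ(G,w)`. -/
noncomputable def thetaW (G : SimpleGraph V) (w : V → ℝ) : ℝ :=
  sSup {r : ℝ | ∃ x ∈ THbody G, r = ip w x}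


section AuxSection
set_option linter.unusedSectionVars false
set_option maxHeartbeats 1600000

namespace Aux
open Matrix
lemma psdSqrt_spec {N : Matrix V V ℝ} (hN : N.PosSemidef) :
    (psdSqrt N).PosSemidef ∧ psdSqrt N * psdSqrt N = N := by
  rw [psdSqrt, dif_pos hN]
  set U : Matrix V V ℝ := hN.1.eigenvectorUnitary.1 with hUdef
  have hU : (star hN.1.eigenvectorUnitary : Matrix V V ℝ) = Uᴴ := rfl
  have hUU : Uᴴ * U = 1 := Unitary.star_mul_self_of_mem hN.1.eigenvectorUnitary.2
  have hev : ∀ i, 0 ≤ hN.1.eigenvalues i := fun i => hN.eigenvalues_nonneg i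
  rw [hU]
  constructor
  · have hD : (Matrix.diagonal ((↑) ∘ Real.sqrt ∘ hN.1.eigenvalues) : Matrix V V ℝ).PosSemidef :=
      Matrix.PosSemidef.diagonal fun i => by simp [Real.sqrt_nonneg]
    exact hD.mul_mul_conjTranspose_same U
  · have hsp := hN.1.spectral_theorem
    rw [Unitary.conjStarAlgAut_apply] at hsp
    conv_rhs => rw [hsp]
    rw [hU]
    calc U * diagonal ((↑) ∘ Real.sqrt ∘ hN.1.eigenvalues) * Uᴴ *
          (U * diagonal ((↑) ∘ Real.sqrt ∘ hN.1.eigenvalues) * Uᴴ)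
        = U * (diagonal ((↑) ∘ Real.sqrt ∘ hN.1.eigenvalues) * (Uᴴ * U) *
          diagonal ((↑) ∘ Real.sqrt ∘ hN.1.eigenvalues)) * Uᴴ := by
          simp only [Matrix.mul_assoc]
      _ = _ := by
          rw [hUU, Matrix.mul_one, diagonal_mul_diagonal]
          congr 3
          funext k
          simp [Real.mul_self_sqrt (hev k)]
end Aux

namespace Aux

open Matrix

lemma isHermitian_of_isSymm {M : Matrix V V ℝ} (h : M.IsSymm) : M.IsHermitian := by
  ext i j
  simpa [conjTranspose_apply] using congrFun (congrFun h i) j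

section eig
variable {M : Matrix V V ℝ} (hM : M.IsHermitian)

noncomputable def eb (i : V) : V → ℝ := ⇑(hM.eigenvectorBasis i)

lemma eb_dot (i j : V) : eb hM i ⬝ᵥ eb hM j = if i = j then 1 else 0 := by
  have := orthonormal_iff_ite.mp hM.eigenvectorBasis.orthonormal i j
  rw [← this]
  simp [eb, PiLp.inner_apply, RCLike.inner_apply, dotProduct, mul_comm]

lemma eb_expand (x : V → ℝ) : ∑ i, (eb hM i ⬝ᵥ x) • eb hM i = x := by
  have := hM.eigenvectorBasis.sum_repr' (WithLp.toLp 2 x : EuclideanSpace ℝ V)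
  have h2 : ∀ i, (inner ℝ (hM.eigenvectorBasis i) (WithLp.toLp 2 x : EuclideanSpace ℝ V) : ℝ)
      = eb hM i ⬝ᵥ x := by
    intro i
    simp [eb, PiLp.inner_apply, dotProduct, mul_comm]
  have h3 := congrArg (WithLp.ofLp) this
  simp only [WithLp.ofLp_sum, WithLp.ofLp_smul, h2] at h3
  exact h3

lemma mulVec_eb (i : V) : M *ᵥ eb hM i = hM.eigenvalues i • eb hM i :=
  hM.mulVec_eigenvectorBasis i

end eig

end Aux

namespace Aux
open Matrix
variable {M : Matrix V V ℝ} (hM : M.IsHermitian)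

lemma sum_dot (f : V → (V → ℝ)) (y : V → ℝ) : (∑ i, f i) ⬝ᵥ y = ∑ i, f i ⬝ᵥ y := by
  simp only [dotProduct, Finset.sum_apply, Finset.sum_mul]
  exact Finset.sum_comm

lemma dot_sum (f : V → (V → ℝ)) (y : V → ℝ) : y ⬝ᵥ (∑ i, f i) = ∑ i, y ⬝ᵥ f i := by
  simp only [dotProduct, Finset.sum_apply, Finset.mul_sum]
  exact Finset.sum_comm

lemma mulVec_sumv (M : Matrix V V ℝ) (f : V → (V → ℝ)) :
    M *ᵥ (∑ i, f i) = ∑ i, M *ᵥ f i := by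
  exact map_sum M.mulVecLin f Finset.univ

lemma dot_decomp (x : V → ℝ) : x ⬝ᵥ x = ∑ i, (eb hM i ⬝ᵥ x) ^ 2 := by
  nth_rewrite 1 [← eb_expand hM x]
  rw [sum_dot]
  exact Finset.sum_congr rfl fun i _ => by rw [smul_dotProduct, smul_eq_mul, sq]

lemma dot_mulVec_decomp (x : V → ℝ) :
    x ⬝ᵥ M *ᵥ x = ∑ i, hM.eigenvalues i * (eb hM i ⬝ᵥ x) ^ 2 := by
  nth_rewrite 2 [← eb_expand hM x]
  rw [mulVec_sumv]
  simp_rw [mulVec_smul, mulVec_eb hM]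
  rw [dot_sum]
  refine Finset.sum_congr rfl fun i _ => ?_
  rw [dotProduct_smul, dotProduct_smul, dotProduct_comm]
  simp [smul_eq_mul, sq]; ring

lemma spectrumSet_eq_range : spectrumSet M = Set.range hM.eigenvalues := by
  ext t
  constructor
  · rintro ⟨x, hx, hMx⟩
    by_contra ht
    apply hx
    have key : ∀ i, eb hM i ⬝ᵥ x = 0 := by
      intro i
      have h1 : eb hM i ⬝ᵥ (M *ᵥ x) = hM.eigenvalues i * (eb hM i ⬝ᵥ x) := by
        rw [dotProduct_mulVec, ← mulVec_transpose]
        have hsy : Mᵀ = M := by rw [← Matrix.conjTranspose_eq_transpose_of_trivial]; exact hM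
        rw [hsy, mulVec_eb hM, smul_dotProduct, smul_eq_mul]
      have h2 : eb hM i ⬝ᵥ (M *ᵥ x) = t * (eb hM i ⬝ᵥ x) := by
        rw [hMx, dotProduct_smul, smul_eq_mul]
      have hne : hM.eigenvalues i ≠ t := fun h => ht ⟨i, h⟩
      have h12 := h1.symm.trans h2
      have h3 : (hM.eigenvalues i - t) * (eb hM i ⬝ᵥ x) = 0 := by
        rw [sub_mul, h12]; ring
      rcases mul_eq_zero.mp h3 with h | h
      · exact absurd (by linarith [sub_eq_zero.mp h] : hM.eigenvalues i = t) hne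
      · exact h
    have := eb_expand hM x
    rw [← this]
    simp [key]
  · rintro ⟨i, rfl⟩
    refine ⟨eb hM i, ?_, mulVec_eb hM i⟩
    intro h
    have := eb_dot hM i i
    rw [h] at this
    simp at this

end Aux


namespace Aux
open Matrix
variable {M : Matrix V V ℝ}

lemma lambdaMax_isGreatest [Nonempty V] (hM : M.IsHermitian) : IsGreatest (spectrumSet M) (lambdaMax M) := by
  obtain ⟨i₀, -, hi₀⟩ := Finset.exists_max_image Finset.univ hM.eigenvalues
    ⟨Classical.arbitrary V, Finset.mem_univ _⟩
  have hg : IsGreatest (spectrumSet M) (hM.eigenvalues i₀) := by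
    rw [spectrumSet_eq_range hM]
    exact ⟨⟨i₀, rfl⟩, by rintro t ⟨i, rfl⟩; exact hi₀ i (Finset.mem_univ i)⟩
  rwa [lambdaMax, hg.csSup_eq]

lemma lambdaMin_isLeast [Nonempty V] (hM : M.IsHermitian) : IsLeast (spectrumSet M) (lambdaMin M) := by
  obtain ⟨i₀, -, hi₀⟩ := Finset.exists_min_image Finset.univ hM.eigenvalues
    ⟨Classical.arbitrary V, Finset.mem_univ _⟩
  have hg : IsLeast (spectrumSet M) (hM.eigenvalues i₀) := by
    rw [spectrumSet_eq_range hM]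
    exact ⟨⟨i₀, rfl⟩, by rintro t ⟨i, rfl⟩; exact hi₀ i (Finset.mem_univ i)⟩
  rwa [lambdaMin, hg.csInf_eq]

lemma rayleigh_le [Nonempty V] (hM : M.IsHermitian) (x : V → ℝ) :
    x ⬝ᵥ M *ᵥ x ≤ lambdaMax M * (x ⬝ᵥ x) := by
  rw [dot_mulVec_decomp hM, dot_decomp hM, Finset.mul_sum]
  refine Finset.sum_le_sum fun i _ => ?_
  have h1 : hM.eigenvalues i ≤ lambdaMax M :=
    (lambdaMax_isGreatest hM).2 ((spectrumSet_eq_range hM).symm ▸ Set.mem_range_self i)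
  exact mul_le_mul_of_nonneg_right h1 (sq_nonneg _)

lemma rayleigh_ge [Nonempty V] (hM : M.IsHermitian) (x : V → ℝ) :
    lambdaMin M * (x ⬝ᵥ x) ≤ x ⬝ᵥ M *ᵥ x := by
  rw [dot_mulVec_decomp hM, dot_decomp hM, Finset.mul_sum]
  refine Finset.sum_le_sum fun i _ => ?_
  have h1 : lambdaMin M ≤ hM.eigenvalues i :=
    (lambdaMin_isLeast hM).2 ((spectrumSet_eq_range hM).symm ▸ Set.mem_range_self i)
  exact mul_le_mul_of_nonneg_right h1 (sq_nonneg _)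

lemma dot_self_pos {x : V → ℝ} (hx : x ≠ 0) : 0 < x ⬝ᵥ x :=
  lt_of_le_of_ne (Finset.sum_nonneg fun i _ => mul_self_nonneg _)
    (fun h => hx (dotProduct_self_eq_zero.mp h.symm))

lemma lambdaMax_nonneg_of_psd [Nonempty V] (hP : M.PosSemidef) : 0 ≤ lambdaMax M := by
  obtain ⟨x, hx, hMx⟩ := (lambdaMax_isGreatest hP.1).1
  have hxx : 0 < x ⬝ᵥ x := dot_self_pos hx
  have h2 : 0 ≤ x ⬝ᵥ M *ᵥ x := by simpa using hP.dotProduct_mulVec_nonneg x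
  rw [hMx, dotProduct_smul, smul_eq_mul] at h2
  exact nonneg_of_mul_nonneg_right (by linarith [h2] : 0 ≤ x ⬝ᵥ x * lambdaMax M) hxx

end Aux


namespace Aux
open Matrix

variable {M : Matrix V V ℝ}

lemma trace_conj_eq (S M : Matrix V V ℝ) :
    (Sᴴ * M * S).trace = ∑ i, (fun j => S j i) ⬝ᵥ M *ᵥ (fun j => S j i) := by
  simp only [Matrix.trace, Matrix.diag, Matrix.mul_apply, conjTranspose_apply, star_trivial,
    dotProduct, Matrix.mulVec, Finset.sum_mul, Finset.mul_sum]
  refine Finset.sum_congr rfl fun i _ => ?_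
  rw [Finset.sum_comm]
  refine Finset.sum_congr rfl fun j _ => Finset.sum_congr rfl fun k _ => by ring

lemma trace_mul_le_lambdaMax [Nonempty V] (hM : M.IsHermitian) {X : Matrix V V ℝ}
    (hX : X.PosSemidef) : (M * X).trace ≤ lambdaMax M * X.trace := by
  obtain ⟨S, hSsym, hSS⟩ : ∃ S : Matrix V V ℝ, S.IsHermitian ∧ S * S = X :=
    ⟨psdSqrt X, (psdSqrt_spec hX).1.1, (psdSqrt_spec hX).2⟩
  have h1 : (M * X).trace = (Sᴴ * M * S).trace := by
    rw [hSsym, ← hSS, ← Matrix.mul_assoc, Matrix.trace_mul_cycle]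
  have h2 : X.trace = (Sᴴ * 1 * S).trace := by
    rw [Matrix.mul_one, hSsym, hSS]
  rw [h1, h2, trace_conj_eq, trace_conj_eq, Finset.mul_sum]
  refine Finset.sum_le_sum fun i _ => ?_
  calc (fun j => S j i) ⬝ᵥ M *ᵥ (fun j => S j i)
      ≤ lambdaMax M * ((fun j => S j i) ⬝ᵥ (fun j => S j i)) :=
        rayleigh_le hM _
    _ = lambdaMax M * ((fun j => S j i) ⬝ᵥ 1 *ᵥ (fun j => S j i)) := by
        rw [Matrix.one_mulVec]

lemma trace_mul_nonneg {P Y : Matrix V V ℝ} (hP : P.PosSemidef) (hY : Y.PosSemidef) :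
    0 ≤ (P * Y).trace := by
  obtain ⟨S, hSsym, hSS⟩ : ∃ S : Matrix V V ℝ, S.IsHermitian ∧ S * S = Y :=
    ⟨psdSqrt Y, (psdSqrt_spec hY).1.1, (psdSqrt_spec hY).2⟩
  have h1 : (P * Y).trace = (Sᴴ * P * S).trace := by
    rw [hSsym, ← hSS, ← Matrix.mul_assoc, Matrix.trace_mul_cycle]
  rw [h1, trace_conj_eq]
  exact Finset.sum_nonneg fun i _ => by simpa using hP.dotProduct_mulVec_nonneg (fun j => S j i)

lemma trace_psd_nonneg {Y : Matrix V V ℝ} (hY : Y.PosSemidef) : 0 ≤ Y.trace := by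
  simpa using trace_mul_nonneg (Matrix.PosSemidef.one (n := V) (R := ℝ)) hY

lemma psd_diag_nonneg {Y : Matrix V V ℝ} (hY : Y.PosSemidef) (i : V) : 0 ≤ Y i i := by
  have := hY.dotProduct_mulVec_nonneg (Pi.single i 1)
  simpa [Matrix.mulVec_single, dotProduct_single] using this

lemma lambdaMax_mul_conjTranspose_comm [Nonempty V] (C : Matrix V V ℝ) :
    lambdaMax (Cᴴ * C) = lambdaMax (C * Cᴴ) := by
  have key : ∀ D : Matrix V V ℝ, lambdaMax (Dᴴ * D) ≤ lambdaMax (D * Dᴴ) := by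
    intro D
    have hP : (Dᴴ * D).PosSemidef := Matrix.posSemidef_conjTranspose_mul_self D
    have hQ : (D * Dᴴ).PosSemidef := Matrix.posSemidef_self_mul_conjTranspose D
    obtain ⟨x, hx, hMx⟩ := (lambdaMax_isGreatest hP.1).1
    set t := lambdaMax (Dᴴ * D) with ht
    rcases le_or_gt t 0 with h | h
    · exact h.trans (lambdaMax_nonneg_of_psd hQ)
    · refine (lambdaMax_isGreatest hQ.1).2 ⟨D *ᵥ x, ?_, ?_⟩
      · intro hDx
        apply hx
        have hx0 : t • x = 0 := by
          rw [← hMx, ← Matrix.mulVec_mulVec, hDx, Matrix.mulVec_zero]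
        have := congrArg (fun v => t⁻¹ • v) hx0
        simpa [smul_smul, inv_mul_cancel₀ (ne_of_gt h)] using this
      · rw [Matrix.mulVec_mulVec, Matrix.mul_assoc, ← Matrix.mulVec_mulVec, hMx,
          Matrix.mulVec_smul]
  exact le_antisymm (key C) (by simpa using key Cᴴ)

lemma vecMulVec_posSemidef (x : V → ℝ) : (Matrix.vecMulVec x x).PosSemidef := by
  refine Matrix.PosSemidef.of_dotProduct_mulVec_nonneg ?_ ?_
  · ext i j
    simp [Matrix.vecMulVec_apply, mul_comm]
  · intro y
    have : (Matrix.vecMulVec x x) *ᵥ y = (x ⬝ᵥ y) • x := by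
      ext i
      simp only [Matrix.mulVec, Matrix.vecMulVec_apply, dotProduct, Pi.smul_apply, smul_eq_mul,
        Finset.sum_mul]
      exact Finset.sum_congr rfl fun k _ => by ring
    rw [this]
    simp only [star_trivial, dotProduct_smul, smul_eq_mul]
    rw [dotProduct_comm]
    exact mul_self_nonneg _

lemma trace_mul_vecMulVec (M : Matrix V V ℝ) (x : V → ℝ) :
    (M * Matrix.vecMulVec x x).trace = x ⬝ᵥ M *ᵥ x := by
  simp only [Matrix.trace, Matrix.diag, Matrix.mul_apply, Matrix.vecMulVec_apply,
    dotProduct, Matrix.mulVec]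
  refine Finset.sum_congr rfl fun i _ => ?_
  rw [Finset.mul_sum]
  refine Finset.sum_congr rfl fun j _ => by ring

lemma vecMulVec_trace (x : V → ℝ) : (Matrix.vecMulVec x x).trace = x ⬝ᵥ x := by
  simp [Matrix.trace, Matrix.diag, Matrix.vecMulVec_apply, dotProduct]

/-- Attainment: there is a PSD matrix of trace one achieving `lambdaMax` in `trace (M * X)`. -/
lemma exists_density_attains [Nonempty V] (hM : M.IsHermitian) :
    ∃ X : Matrix V V ℝ, X.PosSemidef ∧ X.trace = 1 ∧ (M * X).trace = lambdaMax M := by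
  obtain ⟨x, hx, hMx⟩ := (lambdaMax_isGreatest hM).1
  have hxx : 0 < x ⬝ᵥ x := dot_self_pos hx
  refine ⟨(x ⬝ᵥ x)⁻¹ • Matrix.vecMulVec x x, ?_, ?_, ?_⟩
  · refine Matrix.PosSemidef.of_dotProduct_mulVec_nonneg ?_ ?_
    · ext i j
      simp [Matrix.vecMulVec_apply, mul_comm]
    · intro y
      have := (vecMulVec_posSemidef x).dotProduct_mulVec_nonneg y
      simp only [Matrix.smul_mulVec, dotProduct_smul, star_trivial] at this ⊢
      exact smul_nonneg (inv_nonneg.mpr hxx.le) this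
  · rw [Matrix.trace_smul, vecMulVec_trace, smul_eq_mul, inv_mul_cancel₀ (ne_of_gt hxx)]
  · rw [Matrix.mul_smul, Matrix.trace_smul, trace_mul_vecMulVec, hMx, dotProduct_smul,
      smul_eq_mul, smul_eq_mul]
    field_simp

end Aux

namespace Aux
open Matrix

lemma psd_of_diag_zero_aux {P : Matrix V V ℝ} (hP : P.PosSemidef) (hd : ∀ i, P i i = 0) :
    P = 0 := by
  ext i j
  by_cases hij : i = j
  · subst hij; simpa using hd i
  · have hsym : P j i = P i j := by
      have := hP.1
      calc P j i = Pᴴ i j := by simp [conjTranspose_apply]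
        _ = P i j := by rw [this]
    have key : ∀ s : ℝ, 0 ≤ s * (2 * P i j) := by
      intro s
      set v : V → ℝ := (Pi.single i 1 : V → ℝ) + s • (Pi.single j 1 : V → ℝ) with hv
      have h2 := hP.dotProduct_mulVec_nonneg v
      simp only [star_trivial] at h2
      have expand : v ⬝ᵥ P *ᵥ v = s * (2 * P i j) := by
        rw [hv]
        simp only [Matrix.mulVec_add, Matrix.mulVec_smul, add_dotProduct, dotProduct_add,
          smul_dotProduct, dotProduct_smul, Matrix.mulVec_single, dotProduct_single,
          single_dotProduct, smul_eq_mul, mul_one, one_mul, Matrix.col_apply, op_smul_eq_mul]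
        rw [hd i, hd j, hsym]
        ring
      rw [expand] at h2
      exact h2
    have h1 := key 1
    have h2 := key (-1)
    have : P i j = 0 := by nlinarith
    simpa using this

lemma lambdaMin_neg_of_ne_zero {A : Matrix V V ℝ} (hsym : A.IsSymm)
    (hdiag : ∀ i, A i i = 0) (h0 : A ≠ 0) : lambdaMin A < 0 := by
  have hherm : A.IsHermitian := isHermitian_of_isSymm hsym
  have hne : Nonempty V := by
    by_contra h
    rw [not_nonempty_iff] at h
    exact h0 (by ext i j; exact (h.false i).elim)
  by_contra hmin
  push_neg at hmin
  apply h0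
  refine psd_of_diag_zero_aux (Matrix.PosSemidef.of_dotProduct_mulVec_nonneg hherm fun x => ?_) hdiag
  have := rayleigh_ge hherm x
  have hxx : 0 ≤ x ⬝ᵥ x := Finset.sum_nonneg fun i _ => mul_self_nonneg _
  simp only [star_trivial]
  nlinarith

lemma one_add_hatM_psd {G : SimpleGraph V} {A : Matrix V V ℝ} (hA : IsGenAdj G A) :
    (1 + hatM A).PosSemidef := by
  have hdiag : ∀ i, A i i = 0 := fun i => hA.2 i i (G.irrefl)
  by_cases h0 : A = 0
  · have h1 : (1 + hatM A) = (1 : Matrix V V ℝ) := by rw [hatM, if_pos h0, add_zero]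
    rw [h1]
    exact Matrix.PosSemidef.one
  · have hherm : A.IsHermitian := isHermitian_of_isSymm hA.1
    have hne : Nonempty V := by
      by_contra h
      rw [not_nonempty_iff] at h
      exact h0 (by ext i j; exact (h.false i).elim)
    have hmin : lambdaMin A < 0 := lambdaMin_neg_of_ne_zero hA.1 hdiag h0
    have hc : (0:ℝ) < (-(lambdaMin A))⁻¹ := inv_pos.mpr (by linarith)
    refine Matrix.PosSemidef.of_dotProduct_mulVec_nonneg ?_ ?_
    · have hh : (hatM A).IsHermitian := by
        rw [hatM, if_neg h0]
        ext i j
        simp only [Matrix.conjTranspose_apply, Matrix.smul_apply, star_trivial, smul_eq_mul]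
        rw [← hherm.apply i j]
        simp
      exact Matrix.isHermitian_one.add hh
    · intro x
      simp only [star_trivial, Matrix.add_mulVec, Matrix.one_mulVec, dotProduct_add]
      rw [hatM, if_neg h0]
      rw [Matrix.smul_mulVec, dotProduct_smul, smul_eq_mul]
      have hray := rayleigh_ge hherm x
      have hxx : 0 ≤ x ⬝ᵥ x := Finset.sum_nonneg fun i _ => mul_self_nonneg _
      have key : (-(lambdaMin A))⁻¹ * (x ⬝ᵥ A *ᵥ x) ≥ (-(lambdaMin A))⁻¹ * (lambdaMin A * (x ⬝ᵥ x)) :=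
        mul_le_mul_of_nonneg_left hray hc.le
      have heq : (-(lambdaMin A))⁻¹ * (lambdaMin A * (x ⬝ᵥ x)) = -(x ⬝ᵥ x) := by
        rw [inv_mul_eq_div, div_eq_iff (by linarith : -lambdaMin A ≠ 0)]
        ring
      nlinarith [key, heq]

lemma one_add_hatM_diag {G : SimpleGraph V} {A : Matrix V V ℝ} (hA : IsGenAdj G A) (i : V) :
    (1 + hatM A) i i = 1 := by
  have hdiag : A i i = 0 := hA.2 i i (G.irrefl)
  by_cases h0 : A = 0
  · simp [hatM, h0, Matrix.one_apply]
  · simp [hatM, if_neg h0, Matrix.add_apply, Matrix.one_apply, hdiag]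

lemma psdSqrt_psd {N : Matrix V V ℝ} (hN : N.PosSemidef) : (psdSqrt N).PosSemidef := by
  exact (psdSqrt_spec hN).1

lemma psdSqrt_mul_self {N : Matrix V V ℝ} (hN : N.PosSemidef) : psdSqrt N * psdSqrt N = N := by
  exact (psdSqrt_spec hN).2

end Aux

namespace Aux
open Matrix

noncomputable def Bm (A : Matrix V V ℝ) : Matrix V V ℝ := psdSqrt (1 + hatM A)

variable {G : SimpleGraph V} {A : Matrix V V ℝ}

lemma Bm_psd (hA : IsGenAdj G A) : (Bm A).PosSemidef := psdSqrt_psd (one_add_hatM_psd hA)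

lemma Bm_herm (hA : IsGenAdj G A) : (Bm A)ᴴ = Bm A := (Bm_psd hA).1

lemma Bm_mul_self (hA : IsGenAdj G A) : Bm A * Bm A = 1 + hatM A :=
  psdSqrt_mul_self (one_add_hatM_psd hA)

lemma BXB_psd (hA : IsGenAdj G A) {X : Matrix V V ℝ} (hX : X.PosSemidef) :
    (Bm A * X * Bm A).PosSemidef := by
  have := hX.mul_mul_conjTranspose_same (Bm A)
  rwa [Bm_herm hA] at this

lemma ip_diagVec_trace (w : V → ℝ) (M' : Matrix V V ℝ) :
    ip w (diagVec M') = (Matrix.diagonal w * M').trace := by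
  simp only [ip, diagVec, Matrix.trace, Matrix.diag, Matrix.mul_apply, Matrix.diagonal_apply]
  refine Finset.sum_congr rfl fun i _ => ?_
  rw [Finset.sum_eq_single i]
  · simp
  · intro b _ hb; simp [Ne.symm hb]
  · intro h; exact absurd (Finset.mem_univ i) h

lemma trace_rot (w : V → ℝ) (X : Matrix V V ℝ) :
    (Matrix.diagonal w * (Bm A * X * Bm A)).trace
      = ((Bm A * Matrix.diagonal w * Bm A) * X).trace := by
  simp only [← Matrix.mul_assoc]
  rw [Matrix.trace_mul_cycle (Matrix.diagonal w * Bm A) X (Bm A)]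
  simp only [← Matrix.mul_assoc]

lemma Q_psd (hA : IsGenAdj G A) {w : V → ℝ} (hw : 0 ≤ w) :
    (Bm A * Matrix.diagonal w * Bm A).PosSemidef := by
  have hd : (Matrix.diagonal w).PosSemidef := Matrix.PosSemidef.diagonal hw
  have := hd.mul_mul_conjTranspose_same (Bm A)
  rwa [Bm_herm hA] at this

lemma Q_herm (hA : IsGenAdj G A) {w : V → ℝ} (hw : 0 ≤ w) :
    (Bm A * Matrix.diagonal w * Bm A).IsHermitian := (Q_psd hA hw).1

lemma hoffman_eq_lambdaMax [Nonempty V] (hA : IsGenAdj G A) {w : V → ℝ} (hw : 0 ≤ w) :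
    hoffman A w = lambdaMax (Bm A * Matrix.diagonal w * Bm A) := by
  have hdpsd : (Matrix.diagonal w).PosSemidef := Matrix.PosSemidef.diagonal hw
  have hS : psdSqrt (Matrix.diagonal w) * psdSqrt (Matrix.diagonal w) = Matrix.diagonal w :=
    psdSqrt_mul_self hdpsd
  have hSh : (psdSqrt (Matrix.diagonal w))ᴴ = psdSqrt (Matrix.diagonal w) := (psdSqrt_psd hdpsd).1
  set Sw := psdSqrt (Matrix.diagonal w)
  set B := Bm A
  have hC := lambdaMax_mul_conjTranspose_comm (V := V) (Sw * B)
  have h1 : (Sw * B)ᴴ * (Sw * B) = B * Matrix.diagonal w * B := by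
    rw [Matrix.conjTranspose_mul, hSh, Bm_herm hA]
    calc B * Sw * (Sw * B) = B * (Sw * Sw) * B := by simp only [Matrix.mul_assoc]
      _ = B * Matrix.diagonal w * B := by rw [hS]
  have h2 : (Sw * B) * (Sw * B)ᴴ = Sw * (1 + hatM A) * Sw := by
    rw [Matrix.conjTranspose_mul, hSh, Bm_herm hA]
    calc Sw * B * (B * Sw) = Sw * (B * B) * Sw := by simp only [Matrix.mul_assoc]
      _ = Sw * (1 + hatM A) * Sw := by rw [Bm_mul_self hA]
  rw [h1, h2] at hC
  rw [hoffman, ← hC]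

end Aux

namespace Aux
open Matrix

variable {G : SimpleGraph V} {A : Matrix V V ℝ}

lemma psdSqrt_eq_Bm : psdSqrt (1 + hatM A) = Bm A := rfl

lemma isGreatest_density [Nonempty V] (hA : IsGenAdj G A) {w : V → ℝ} (hw : 0 ≤ w) :
    IsGreatest {r : ℝ | ∃ X : Matrix V V ℝ, X.PosSemidef ∧ X.trace = 1 ∧
        r = ip w (diagVec (psdSqrt (1 + hatM A) * X * psdSqrt (1 + hatM A)))}
      (lambdaMax (Bm A * Matrix.diagonal w * Bm A)) := by
  constructor
  · obtain ⟨X, hX, htr, hval⟩ := exists_density_attains (Q_herm hA hw)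
    exact ⟨X, hX, htr, by rw [psdSqrt_eq_Bm, ip_diagVec_trace, trace_rot, hval]⟩
  · rintro r ⟨X, hX, htr, rfl⟩
    rw [psdSqrt_eq_Bm, ip_diagVec_trace, trace_rot]
    calc ((Bm A * Matrix.diagonal w * Bm A) * X).trace
        ≤ lambdaMax (Bm A * Matrix.diagonal w * Bm A) * X.trace :=
          trace_mul_le_lambdaMax (Q_herm hA hw) hX
      _ = lambdaMax (Bm A * Matrix.diagonal w * Bm A) := by rw [htr, mul_one]

lemma isGreatest_Hset [Nonempty V] (hA : IsGenAdj G A) {w : V → ℝ} (hw : 0 ≤ w) :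
    IsGreatest {r : ℝ | ∃ x ∈ Hset A, r = ip w x}
      (lambdaMax (Bm A * Matrix.diagonal w * Bm A)) := by
  constructor
  · obtain ⟨X, hX, htr, hval⟩ := exists_density_attains (Q_herm hA hw)
    refine ⟨diagVec (Bm A * X * Bm A), ⟨?_, X, hX, le_of_eq htr, fun i => le_of_eq ?_⟩, ?_⟩
    · intro i
      exact psd_diag_nonneg (BXB_psd hA hX) i
    · rw [psdSqrt_eq_Bm]
    · rw [ip_diagVec_trace, trace_rot, hval]
  · rintro r ⟨x, ⟨hx0, Y, hY, hYtr, hle⟩, rfl⟩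
    have hq := lambdaMax_nonneg_of_psd (Q_psd hA hw)
    calc ip w x ≤ ip w (diagVec (Bm A * Y * Bm A)) := by
          refine Finset.sum_le_sum fun i _ => ?_
          have := hle i
          rw [psdSqrt_eq_Bm] at this
          exact mul_le_mul_of_nonneg_left this (hw i)
      _ = ((Bm A * Matrix.diagonal w * Bm A) * Y).trace := by
          rw [ip_diagVec_trace, trace_rot]
      _ ≤ lambdaMax (Bm A * Matrix.diagonal w * Bm A) * Y.trace :=
          trace_mul_le_lambdaMax (Q_herm hA hw) hY
      _ ≤ lambdaMax (Bm A * Matrix.diagonal w * Bm A) * 1 :=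
          mul_le_mul_of_nonneg_left hYtr hq
      _ = lambdaMax (Bm A * Matrix.diagonal w * Bm A) := mul_one _

lemma upsilon_le_one_of_mem (hA : IsGenAdj G A) {x : V → ℝ} (hx : x ∈ Hset A) :
    upsilon A x ≤ 1 := by
  obtain ⟨hx0, Y, hYpsd, hYtr, hle⟩ := hx
  refine Real.sSup_le ?_ zero_le_one
  rintro r ⟨y, ⟨hy0, hyP⟩, rfl⟩
  rw [psdSqrt_eq_Bm] at hyP
  have step1 : ip x y ≤ ip y (diagVec (Bm A * Y * Bm A)) := by
    rw [ip, ip]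
    rw [show ∑ i, y i * diagVec (Bm A * Y * Bm A) i
        = ∑ i, diagVec (Bm A * Y * Bm A) i * y i from
      Finset.sum_congr rfl fun i _ => mul_comm _ _]
    refine Finset.sum_le_sum fun i _ => ?_
    have := hle i
    rw [psdSqrt_eq_Bm] at this
    exact mul_le_mul_of_nonneg_right this (hy0 i)
  have step2 : ip y (diagVec (Bm A * Y * Bm A)) = ((Bm A * Matrix.diagonal y * Bm A) * Y).trace := by
    rw [ip_diagVec_trace, trace_rot]
  have step3 : ((Bm A * Matrix.diagonal y * Bm A) * Y).trace ≤ Y.trace := by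
    have h := trace_mul_nonneg hyP hYpsd
    have expand : (1 - Bm A * Matrix.diagonal y * Bm A) * Y
        = Y - (Bm A * Matrix.diagonal y * Bm A) * Y := by
      rw [Matrix.sub_mul, Matrix.one_mul]
    rw [expand, Matrix.trace_sub] at h
    linarith
  calc ip x y ≤ ((Bm A * Matrix.diagonal y * Bm A) * Y).trace := step1.trans (le_of_eq step2)
    _ ≤ Y.trace := step3
    _ ≤ 1 := hYtr

lemma trace_BDyB (hA : IsGenAdj G A) (y : V → ℝ) :
    (Bm A * Matrix.diagonal y * Bm A).trace = ∑ i, y i := by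
  rw [Matrix.trace_mul_cycle (Bm A) (Matrix.diagonal y) (Bm A), Bm_mul_self hA]
  simp only [Matrix.trace, Matrix.diag, Matrix.mul_apply, Matrix.diagonal_apply]
  refine Finset.sum_congr rfl fun i _ => ?_
  rw [Finset.sum_eq_single i]
  · rw [if_pos rfl, one_add_hatM_diag hA, one_mul]
  · intro b _ hb
    rw [if_neg hb, mul_zero]
  · intro h; exact absurd (Finset.mem_univ i) h

lemma Uset_upper (hA : IsGenAdj G A) {y : V → ℝ} (hy : y ∈ Uset A) (i : V) :
    y i ≤ Fintype.card V := by
  obtain ⟨hy0, hyP⟩ := hy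
  rw [psdSqrt_eq_Bm] at hyP
  have h1 : (Bm A * Matrix.diagonal y * Bm A).trace ≤ Fintype.card V := by
    have h := trace_psd_nonneg hyP
    rw [Matrix.trace_sub, Matrix.trace_one] at h
    linarith
  have h2 : y i ≤ ∑ j, y j :=
    Finset.single_le_sum (fun j _ => hy0 j) (Finset.mem_univ i)
  rw [← trace_BDyB hA y] at h2
  linarith

lemma bddAbove_ip_Uset (hA : IsGenAdj G A) {x : V → ℝ} (hx : 0 ≤ x) :
    BddAbove {r : ℝ | ∃ y ∈ Uset A, r = ip x y} := by
  refine ⟨∑ i, x i * Fintype.card V, ?_⟩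
  rintro r ⟨y, hy, rfl⟩
  exact Finset.sum_le_sum fun i _ =>
    mul_le_mul_of_nonneg_left (Uset_upper hA hy i) (hx i)

end Aux

namespace Aux
open Matrix

variable {G : SimpleGraph V} {A : Matrix V V ℝ}

lemma psd_smul {Y : Matrix V V ℝ} (hY : Y.PosSemidef) {a : ℝ} (ha : 0 ≤ a) :
    (a • Y).PosSemidef := by
  refine Matrix.PosSemidef.of_dotProduct_mulVec_nonneg ?_ ?_
  · ext i j
    simp only [Matrix.conjTranspose_apply, Matrix.smul_apply, star_trivial, smul_eq_mul]
    rw [← hY.1.apply i j]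
    simp
  · intro z
    simp only [star_trivial, Matrix.smul_mulVec, dotProduct_smul, smul_eq_mul]
    exact mul_nonneg ha (by simpa using hY.dotProduct_mulVec_nonneg z)

lemma Hset_convex : Convex ℝ (Hset A) := by
  rintro x ⟨hx0, Y1, hY1, hY1t, hle1⟩ z ⟨hz0, Y2, hY2, hY2t, hle2⟩ a b ha hb hab
  refine ⟨?_, a • Y1 + b • Y2, (psd_smul hY1 ha).add (psd_smul hY2 hb), ?_, ?_⟩
  · intro i
    simp only [Pi.add_apply, Pi.smul_apply, smul_eq_mul]
    exact add_nonneg (mul_nonneg ha (hx0 i)) (mul_nonneg hb (hz0 i))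
  · rw [Matrix.trace_add, Matrix.trace_smul, Matrix.trace_smul]
    calc (a • Y1.trace) + (b • Y2.trace) ≤ a * 1 + b * 1 := by
          exact add_le_add (mul_le_mul_of_nonneg_left hY1t ha)
            (mul_le_mul_of_nonneg_left hY2t hb)
      _ = 1 := by rw [mul_one, mul_one, hab]
  · intro i
    have expand : psdSqrt (1 + hatM A) * (a • Y1 + b • Y2) * psdSqrt (1 + hatM A)
        = a • (psdSqrt (1 + hatM A) * Y1 * psdSqrt (1 + hatM A))
          + b • (psdSqrt (1 + hatM A) * Y2 * psdSqrt (1 + hatM A)) := by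
      rw [Matrix.mul_add, Matrix.add_mul]
      rw [mul_smul_comm, mul_smul_comm, smul_mul_assoc, smul_mul_assoc]
    rw [expand]
    simp only [Pi.add_apply, Pi.smul_apply, smul_eq_mul, diagVec, Matrix.add_apply,
      Matrix.smul_apply]
    exact add_le_add (mul_le_mul_of_nonneg_left (hle1 i) ha)
      (mul_le_mul_of_nonneg_left (hle2 i) hb)

end Aux

namespace Aux
open Matrix

variable {G : SimpleGraph V} {A : Matrix V V ℝ}

/-- Continuity of an entry of the first component. -/
lemma cont_entry (i j : V) :
    Continuous fun p : (V → V → ℝ) × (V → ℝ) => p.1 i j :=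
  (continuous_apply j).comp ((continuous_apply i).comp continuous_fst)

lemma psd_entry_le {Y : Matrix V V ℝ} (hY : Y.PosSemidef) (ht : Y.trace ≤ 1) (i j : V) :
    |Y i j| ≤ 1 := by
  have hdiag : ∀ k, 0 ≤ Y k k := psd_diag_nonneg hY
  have hdle : ∀ k, Y k k ≤ 1 := by
    intro k
    have : Y k k ≤ Y.trace :=
      Finset.single_le_sum (fun l _ => hdiag l) (Finset.mem_univ k)
    linarith
  by_cases hij : i = j
  · subst hij
    rw [abs_le]
    exact ⟨by linarith [hdiag i], hdle i⟩
  · have hsym : Y j i = Y i j := by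
      rw [← hY.1.apply j i]
      simp
    have key : ∀ s : ℝ, 0 ≤ Y i i + s * (2 * Y i j) + s^2 * Y j j := by
      intro s
      set v : V → ℝ := (Pi.single i 1 : V → ℝ) + s • (Pi.single j 1 : V → ℝ) with hv
      have h2 := hY.dotProduct_mulVec_nonneg v
      simp only [star_trivial] at h2
      have expand : v ⬝ᵥ Y *ᵥ v = Y i i + s * (2 * Y i j) + s^2 * Y j j := by
        rw [hv]
        simp only [Matrix.mulVec_add, Matrix.mulVec_smul, add_dotProduct, dotProduct_add,
          smul_dotProduct, dotProduct_smul, Matrix.mulVec_single, dotProduct_single,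
          single_dotProduct, smul_eq_mul, mul_one, one_mul, Matrix.col_apply, op_smul_eq_mul]
        rw [hsym]
        ring
      rw [expand] at h2
      exact h2
    have h1 := key 1
    have h2 := key (-1)
    have hYii := hdle i
    have hYjj := hdle j
    have hYii0 := hdiag i
    have hYjj0 := hdiag j
    rw [abs_le]
    constructor <;> nlinarith

lemma Hset_isClosed [Nonempty V] (hA : IsGenAdj G A) : IsClosed (Hset A) := by
  classical
  set B := Bm A with hB
  set T : Set ((V → V → ℝ) × (V → ℝ)) :=
    {p | (∀ i j, p.1 i j = p.1 j i) ∧ (∀ z : V → ℝ, 0 ≤ z ⬝ᵥ (Matrix.of p.1) *ᵥ z) ∧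
      (Matrix.of p.1).trace ≤ 1 ∧ (∀ i, 0 ≤ p.2 i) ∧
      ∀ i, p.2 i ≤ (B * Matrix.of p.1 * B) i i} with hT
  have hTpsd : ∀ p ∈ T, (Matrix.of p.1).PosSemidef := by
    rintro p ⟨hsym, hquad, -, -, -⟩
    refine Matrix.PosSemidef.of_dotProduct_mulVec_nonneg ?_ fun z => by simpa using hquad z
    ext i j
    simp only [Matrix.conjTranspose_apply, star_trivial]
    exact hsym j i
  have him : Hset A = Prod.snd '' T := by
    ext x
    constructor
    · rintro ⟨hx0, Y, hY, hYt, hle⟩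
      refine ⟨(fun i j => Y i j, x), ⟨?_, ?_, ?_, ?_, ?_⟩, rfl⟩
      · intro i j
        show Y i j = Y j i
        rw [← hY.1.apply i j]; simp
      · intro z
        exact hY.dotProduct_mulVec_nonneg z
      · exact hYt
      · exact hx0
      · intro i
        exact hle i
    · rintro ⟨p, ⟨hsym, hquad, htr, hx0, hle⟩, rfl⟩
      exact ⟨hx0, Matrix.of p.1, hTpsd p ⟨hsym, hquad, htr, hx0, hle⟩, htr, hle⟩
  have hcont_quad : ∀ z : V → ℝ,
      Continuous fun p : (V → V → ℝ) × (V → ℝ) => z ⬝ᵥ (Matrix.of p.1) *ᵥ z := by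
    intro z
    have : (fun p : (V → V → ℝ) × (V → ℝ) => z ⬝ᵥ (Matrix.of p.1) *ᵥ z)
        = fun p => ∑ i, ∑ j, z i * (p.1 i j * z j) := by
      funext p
      simp [dotProduct, Matrix.mulVec, Finset.mul_sum]
    rw [this]
    refine continuous_finset_sum _ fun i _ => continuous_finset_sum _ fun j _ => ?_
    exact continuous_const.mul ((cont_entry i j).mul continuous_const)
  have hcont_diag : ∀ i : V,
      Continuous fun p : (V → V → ℝ) × (V → ℝ) => (B * Matrix.of p.1 * B) i i := by
    intro i
    have : (fun p : (V → V → ℝ) × (V → ℝ) => (B * Matrix.of p.1 * B) i i)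
        = fun p => ∑ j, (∑ k, B i k * p.1 k j) * B j i := by
      funext p
      simp [Matrix.mul_apply]
    rw [this]
    refine continuous_finset_sum _ fun j _ => Continuous.mul ?_ continuous_const
    exact continuous_finset_sum _ fun k _ => continuous_const.mul (cont_entry k j)
  have hTclosed : IsClosed T := by
    rw [hT]
    simp only [Set.setOf_and]
    refine IsClosed.inter ?_ (IsClosed.inter ?_ (IsClosed.inter ?_ (IsClosed.inter ?_ ?_)))
    · rw [Set.setOf_forall]
      refine isClosed_iInter fun i => ?_
      rw [Set.setOf_forall]
      exact isClosed_iInter fun j => isClosed_eq (cont_entry i j) (cont_entry j i)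
    · rw [Set.setOf_forall]
      exact isClosed_iInter fun z => isClosed_le continuous_const (hcont_quad z)
    · have hc : Continuous fun p : (V → V → ℝ) × (V → ℝ) => (Matrix.of p.1).trace := by
        have heq : (fun p : (V → V → ℝ) × (V → ℝ) => (Matrix.of p.1).trace)
            = fun p => ∑ i, p.1 i i := by
          funext p; simp [Matrix.trace, Matrix.diag]
        rw [heq]
        exact continuous_finset_sum _ fun i _ => cont_entry i i
      exact isClosed_le hc continuous_const
    · rw [Set.setOf_forall]
      exact isClosed_iInter fun i => isClosed_le continuous_const
        (Continuous.comp (continuous_apply i) continuous_snd)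
    · rw [Set.setOf_forall]
      exact isClosed_iInter fun i => isClosed_le
        (Continuous.comp (continuous_apply i) continuous_snd) (hcont_diag i)
  -- bound
  set R : ℝ := lambdaMax (1 + hatM A) with hR
  have hNpsd : (1 + hatM A).PosSemidef := one_add_hatM_psd hA
  have hR0 : 0 ≤ R := lambdaMax_nonneg_of_psd hNpsd
  have hbound : ∀ p ∈ T, (∀ i j, |p.1 i j| ≤ 1) ∧ ∀ i, |p.2 i| ≤ R := by
    rintro p hp
    obtain ⟨hsym, hquad, htr, hx0, hle⟩ := hp
    have hYpsd := hTpsd p ⟨hsym, hquad, htr, hx0, hle⟩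
    constructor
    · intro i j
      exact psd_entry_le hYpsd htr i j
    · intro i
      have hbxb : (B * Matrix.of p.1 * B).PosSemidef := BXB_psd hA hYpsd
      have hdle : (B * Matrix.of p.1 * B) i i ≤ (B * Matrix.of p.1 * B).trace :=
        Finset.single_le_sum (fun l _ => psd_diag_nonneg hbxb l) (Finset.mem_univ i)
      have htr2 : (B * Matrix.of p.1 * B).trace ≤ R := by
        have hcyc : (B * Matrix.of p.1 * B).trace = ((1 + hatM A) * Matrix.of p.1).trace := by
          rw [Matrix.trace_mul_cycle B (Matrix.of p.1) B, Bm_mul_self hA]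
        rw [hcyc]
        calc ((1 + hatM A) * Matrix.of p.1).trace
            ≤ R * (Matrix.of p.1).trace := trace_mul_le_lambdaMax hNpsd.1 hYpsd
          _ ≤ R * 1 := mul_le_mul_of_nonneg_left htr hR0
          _ = R := mul_one R
      rw [abs_le]
      exact ⟨by linarith [hx0 i], by linarith [hle i]⟩
  have hsubset : T ⊆ (Set.univ.pi fun _ : V => Set.univ.pi fun _ : V => Set.Icc (-1:ℝ) 1) ×ˢ
      (Set.univ.pi fun _ : V => Set.Icc (-R) R) := by
    intro p hp
    obtain ⟨h1, h2⟩ := hbound p hp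
    constructor
    · intro i _
      intro j _
      rw [Set.mem_Icc, ← abs_le]
      exact h1 i j
    · intro i _
      rw [Set.mem_Icc, ← abs_le]
      exact h2 i
  have hKcompact : IsCompact ((Set.univ.pi fun _ : V => Set.univ.pi fun _ : V =>
      Set.Icc (-1:ℝ) 1) ×ˢ (Set.univ.pi fun _ : V => Set.Icc (-R) R)) :=
    (isCompact_univ_pi fun _ => isCompact_univ_pi fun _ => isCompact_Icc).prod
      (isCompact_univ_pi fun _ => isCompact_Icc)
  have hTcompact : IsCompact T := hKcompact.of_isClosed_subset hTclosed hsubset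
  rw [him]
  exact (hTcompact.image continuous_snd).isClosed

end Aux

namespace Aux
open Matrix

variable {G : SimpleGraph V} {A : Matrix V V ℝ}

lemma exists_violating [Nonempty V] (hA : IsGenAdj G A) {x₀ : V → ℝ} (hx₀ : 0 ≤ x₀)
    (hnot : x₀ ∉ Hset A) : ∃ y ∈ Uset A, 1 < ip x₀ y := by
  classical
  obtain ⟨f, u, hfs, hfx⟩ :=
    geometric_hahn_banach_closed_point (Hset_convex (A := A)) (Hset_isClosed hA) hnot
  set c : V → ℝ := fun i => f (Pi.single i 1) with hc
  have hf : ∀ z : V → ℝ, f z = ip c z := by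
    intro z
    have hz : z = ∑ i, Pi.single i (z i) := by
      rw [Finset.univ_sum_single]
    have h1 : f z = ∑ i, z i * c i := by
      conv_lhs => rw [hz]
      rw [map_sum]
      refine Finset.sum_congr rfl fun i _ => ?_
      have hsingle : (Pi.single i (z i) : V → ℝ) = z i • (Pi.single i (1:ℝ) : V → ℝ) := by
        ext j
        by_cases hj : j = i
        · subst hj; simp
        · simp [Pi.single_apply, hj]
      rw [hsingle, _root_.map_smul, smul_eq_mul]
    rw [h1, ip]
    exact Finset.sum_congr rfl fun i _ => mul_comm _ _
  set cp : V → ℝ := fun i => max (c i) 0 with hcp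
  have hcp0 : 0 ≤ cp := fun i => le_max_right _ _
  have key1 : ∀ h ∈ Hset A, ip cp h < u := by
    rintro h ⟨hh0, Y, hY, hYt, hle⟩
    set h' : V → ℝ := fun i => if 0 ≤ c i then h i else 0 with hh'
    have hmem : h' ∈ Hset A := by
      refine ⟨?_, Y, hY, hYt, ?_⟩
      · intro i
        by_cases hci : 0 ≤ c i
        · simpa [hh', hci] using hh0 i
        · simp [hh', hci]
      · intro i
        by_cases hci : 0 ≤ c i
        · simpa [hh', hci] using hle i
        · have := hle i
          have hd : 0 ≤ diagVec (psdSqrt (1 + hatM A) * Y * psdSqrt (1 + hatM A)) i :=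
            le_trans (hh0 i) this
          simpa [hh', hci] using hd
    have heq : ip cp h = ip c h' := by
      rw [ip, ip]
      refine Finset.sum_congr rfl fun i _ => ?_
      by_cases hci : 0 ≤ c i
      · simp [hcp, hh', hci, max_eq_left hci]
      · push_neg at hci
        simp [hcp, hh', not_le.mpr hci, max_eq_right hci.le]
    rw [heq, ← hf h']
    exact hfs h' hmem
  have key3 : u < ip cp x₀ := by
    have h1 : ip c x₀ ≤ ip cp x₀ :=
      Finset.sum_le_sum fun i _ => mul_le_mul_of_nonneg_right (le_max_left _ _) (hx₀ i)
    have h2 := hfx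
    rw [hf x₀] at h2
    linarith
  set Q : Matrix V V ℝ := Bm A * Matrix.diagonal cp * Bm A with hQ
  have hQpsd : Q.PosSemidef := Q_psd hA hcp0
  set lam : ℝ := lambdaMax Q with hlam
  have hlam0 : 0 ≤ lam := lambdaMax_nonneg_of_psd hQpsd
  have key2 : lam < u := by
    obtain ⟨X, hX, htr, hval⟩ := exists_density_attains hQpsd.1
    have hmem : diagVec (Bm A * X * Bm A) ∈ Hset A := by
      refine ⟨fun i => psd_diag_nonneg (BXB_psd hA hX) i, X, hX, le_of_eq htr,
        fun i => le_of_eq ?_⟩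
      rw [psdSqrt_eq_Bm]
    have := key1 _ hmem
    have heq : ip cp (diagVec (Bm A * X * Bm A)) = (Q * X).trace := by
      rw [ip_diagVec_trace, trace_rot]
    rw [heq, hval] at this
    exact this
  have rayQ : ∀ z : V → ℝ, z ⬝ᵥ Q *ᵥ z ≤ lam * (z ⬝ᵥ z) := fun z => rayleigh_le hQpsd.1 z
  rcases lt_or_ge 0 lam with hpos | hneg
  · -- positive lambda
    refine ⟨lam⁻¹ • cp, ⟨fun i => by
      simp only [Pi.smul_apply, smul_eq_mul]
      exact mul_nonneg (inv_nonneg.mpr hlam0) (hcp0 i), ?_⟩, ?_⟩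
    · rw [psdSqrt_eq_Bm]
      have hdiag : Matrix.diagonal (lam⁻¹ • cp) = lam⁻¹ • Matrix.diagonal cp := by
        rw [Matrix.diagonal_smul]
      have hBQ : Bm A * Matrix.diagonal (lam⁻¹ • cp) * Bm A = lam⁻¹ • Q := by
        rw [hdiag, hQ, Matrix.mul_smul, Matrix.smul_mul]
      rw [hBQ]
      refine Matrix.PosSemidef.of_dotProduct_mulVec_nonneg ?_ ?_
      · have hQh := hQpsd.1
        ext i j
        simp only [Matrix.conjTranspose_apply, Matrix.sub_apply, Matrix.smul_apply,
          Matrix.one_apply, star_trivial, smul_eq_mul]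
        rw [← hQh.apply i j]
        by_cases hij : i = j <;> simp [hij, eq_comm]
      · intro z
        simp only [star_trivial, Matrix.sub_mulVec, Matrix.one_mulVec, dotProduct_sub,
          Matrix.smul_mulVec, dotProduct_smul, smul_eq_mul]
        have := rayQ z
        have hzz : 0 ≤ z ⬝ᵥ z := Finset.sum_nonneg fun i _ => mul_self_nonneg _
        have hq : lam⁻¹ * (z ⬝ᵥ Q *ᵥ z) ≤ lam⁻¹ * (lam * (z ⬝ᵥ z)) :=
          mul_le_mul_of_nonneg_left this (inv_nonneg.mpr hlam0)
        rw [← mul_assoc, inv_mul_cancel₀ (ne_of_gt hpos), one_mul] at hq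
        linarith
    · have : ip x₀ (lam⁻¹ • cp) = lam⁻¹ * ip cp x₀ := by
        rw [ip, ip, Finset.mul_sum]
        exact Finset.sum_congr rfl fun i _ => by
          simp only [Pi.smul_apply, smul_eq_mul]; ring
      rw [this]
      have h1 : lam < ip cp x₀ := lt_trans key2 key3
      calc (1:ℝ) = lam⁻¹ * lam := (inv_mul_cancel₀ (ne_of_gt hpos)).symm
        _ < lam⁻¹ * ip cp x₀ := by
            exact mul_lt_mul_of_pos_left h1 (inv_pos.mpr hpos)
  · -- lam ≤ 0, hence lam = 0
    have hlameq : lam = 0 := le_antisymm hneg hlam0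
    have hu0 : 0 < u := by rw [hlameq] at key2; linarith
    have hip0 : 0 < ip cp x₀ := lt_trans hu0 key3
    set t : ℝ := 2 / ip cp x₀ with ht
    have ht0 : 0 < t := by positivity
    refine ⟨t • cp, ⟨fun i => by
      simp only [Pi.smul_apply, smul_eq_mul]
      exact mul_nonneg ht0.le (hcp0 i), ?_⟩, ?_⟩
    · rw [psdSqrt_eq_Bm]
      have hBQ : Bm A * Matrix.diagonal (t • cp) * Bm A = t • Q := by
        rw [Matrix.diagonal_smul, hQ, Matrix.mul_smul, Matrix.smul_mul]
      rw [hBQ]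
      refine Matrix.PosSemidef.of_dotProduct_mulVec_nonneg ?_ ?_
      · have hQh := hQpsd.1
        ext i j
        simp only [Matrix.conjTranspose_apply, Matrix.sub_apply, Matrix.smul_apply,
          Matrix.one_apply, star_trivial, smul_eq_mul]
        rw [← hQh.apply i j]
        by_cases hij : i = j <;> simp [hij, eq_comm]
      · intro z
        simp only [star_trivial, Matrix.sub_mulVec, Matrix.one_mulVec, dotProduct_sub,
          Matrix.smul_mulVec, dotProduct_smul, smul_eq_mul]
        have h1 := rayQ z
        rw [hlameq, zero_mul] at h1
        have h2 : 0 ≤ z ⬝ᵥ z := Finset.sum_nonneg fun i _ => mul_self_nonneg _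
        nlinarith
    · have : ip x₀ (t • cp) = t * ip cp x₀ := by
        rw [ip, ip, Finset.mul_sum]
        exact Finset.sum_congr rfl fun i _ => by
          simp only [Pi.smul_apply, smul_eq_mul]; ring
      rw [this, ht, div_mul_cancel₀ 2 (ne_of_gt hip0)]
      norm_num

lemma mem_Hset_of_upsilon_le (hA : IsGenAdj G A) {x : V → ℝ} (hx0 : 0 ≤ x)
    (hu : upsilon A x ≤ 1) : x ∈ Hset A := by
  cases isEmpty_or_nonempty V with
  | inl h =>
    exact ⟨hx0, 0, Matrix.PosSemidef.zero, by simp [Matrix.trace], fun i => (h.false i).elim⟩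
  | inr h =>
    by_contra hnot
    obtain ⟨y, hy, hgt⟩ := exists_violating hA hx0 hnot
    have hle : ip x y ≤ upsilon A x :=
      le_csSup (bddAbove_ip_Uset hA hx0) ⟨y, hy, rfl⟩
    linarith

end Aux


end AuxSection

/-- `H(A,·)` as linear optimization over convex sets, and `ℋ_A`
is the unit convex corner of `Υ(A,·)`. -/
theorem hoffman_max_convex (G : SimpleGraph V) (A : Matrix V V ℝ)
    (hA : IsGenAdj G A) :
    (∀ w : V → ℝ, 0 ≤ w →
      hoffman A w = sSup {r : ℝ | ∃ X : Matrix V V ℝ, X.PosSemidef ∧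
        X.trace = 1 ∧
        r = ip w (diagVec (psdSqrt (1 + hatM A) * X * psdSqrt (1 + hatM A)))} ∧
      hoffman A w = sSup {r : ℝ | ∃ x ∈ Hset A, r = ip w x}) ∧
    Hset A = {x : V → ℝ | 0 ≤ x ∧ upsilon A x ≤ 1} := by
  constructor
  · intro w hw
    cases isEmpty_or_nonempty V with
    | inl h =>
      have hspec : spectrumSet (psdSqrt (Matrix.diagonal w) * (1 + hatM A) *
          psdSqrt (Matrix.diagonal w)) = ∅ := by
        ext t
        simp only [spectrumSet, Set.mem_setOf_eq, Set.mem_empty_iff_false, iff_false, not_exists]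
        rintro x ⟨hx, -⟩
        exact hx (funext fun i => (h.false i).elim)
      have hhoff : hoffman A w = 0 := by
        rw [hoffman, lambdaMax, hspec, Real.sSup_empty]
      constructor
      · rw [hhoff]
        have hempty : {r : ℝ | ∃ X : Matrix V V ℝ, X.PosSemidef ∧ X.trace = 1 ∧
            r = ip w (diagVec (psdSqrt (1 + hatM A) * X * psdSqrt (1 + hatM A)))} = ∅ := by
          ext r
          simp only [Set.mem_setOf_eq, Set.mem_empty_iff_false, iff_false, not_exists]
          rintro X ⟨-, htr, -⟩
          have : X.trace = 0 := by simp [Matrix.trace]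
          rw [this] at htr
          exact one_ne_zero htr.symm
        rw [hempty, Real.sSup_empty]
      · rw [hhoff]
        have hset : {r : ℝ | ∃ x ∈ Hset A, r = ip w x} = {0} := by
          ext r
          constructor
          · rintro ⟨x, -, rfl⟩
            simp [ip]
          · rintro rfl
            refine ⟨0, ⟨le_refl 0, 0, Matrix.PosSemidef.zero, by simp [Matrix.trace],
              fun i => (h.false i).elim⟩, by simp [ip]⟩
        rw [hset, csSup_singleton]
    | inr h =>
      rw [Aux.hoffman_eq_lambdaMax hA hw]
      exact ⟨(Aux.isGreatest_density hA hw).csSup_eq.symm,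
        (Aux.isGreatest_Hset hA hw).csSup_eq.symm⟩
  · ext x
    simp only [Set.mem_setOf_eq]
    constructor
    · intro hx
      exact ⟨hx.1, Aux.upsilon_le_one_of_mem hA hx⟩
    · rintro ⟨hx0, hu⟩
      exact Aux.mem_Hset_of_upsilon_le hA hx0 hu
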